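/- Define f : ℝ² → ℂ³ by f(x,y) = (1/√3)·(e^{2ix}, e^{i(√3·y - x)}, e^{-i(x + √3·y)}). Then, with respect to the Hermitian inner product ⟨u,v⟩ = Σⱼ uⱼ·conj(vⱼ) on ℂ³: (i) ‖f(x,y)‖ = 1 for all (x,y), so f maps into the unit sphere S⁵; (ii) ⟨∂f/∂x, f⟩ = 0 and ⟨∂f/∂y, f⟩ = 0 everywhere (horizontality: the derivatives are Hermitian-orthogonal to f, in particular orthogonal to both f and i·f); (iii) ⟨∂f/∂x, ∂f/∂y⟩ = 0 and ‖∂f/∂x‖² = ‖∂f/∂y‖² = 2 everywhere (conformality); (iv) f is doubly periodic: f(x + 2π, y) = f(x,y) and f(x, y + 2π/√3) = f(x,y). -/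

import Mathlib

open Complex

noncomputable section

/-- The horizontal (Legendrian) lift of the Clifford torus:
`f(x,y) = (1/√3)·(e^{2ix}, e^{i(√3 y - x)}, e^{-i(x + √3 y)})`. -/
def cliff (x y : ℝ) : Fin 3 → ℂ :=
  ((Real.sqrt 3 : ℂ))⁻¹ •
    ![Complex.exp (2 * Complex.I * (x : ℂ)),
      Complex.exp (Complex.I * ((Real.sqrt 3 : ℂ) * (y : ℂ) - (x : ℂ))),
      Complex.exp (-(Complex.I * ((x : ℂ) + (Real.sqrt 3 : ℂ) * (y : ℂ))))]

/-- coefficients of `x` in the exponent -/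
def Ax : Fin 3 → ℂ := ![2 * Complex.I, -Complex.I, -Complex.I]
/-- coefficients of `y` in the exponent -/
def Ay : Fin 3 → ℂ := ![0, Complex.I * (Real.sqrt 3 : ℂ), -(Complex.I * (Real.sqrt 3 : ℂ))]

def Z (j : Fin 3) (x y : ℝ) : ℂ := Ax j * (x : ℂ) + Ay j * (y : ℂ)

lemma cliff_eq (x y : ℝ) : ∀ j : Fin 3,
    cliff x y j = ((Real.sqrt 3 : ℂ))⁻¹ * Complex.exp (Z j x y)
  | 0 => by
    simp only [cliff, Z, Ax, Ay, Pi.smul_apply, smul_eq_mul, Matrix.cons_val_zero]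
    congr 1; ring
  | 1 => by
    simp only [cliff, Z, Ax, Ay, Pi.smul_apply, smul_eq_mul, Matrix.cons_val_one,
      Matrix.head_cons, Matrix.cons_val_zero]
    congr 1; ring
  | 2 => by
    simp only [cliff, Z, Ax, Ay, Pi.smul_apply, smul_eq_mul, Matrix.cons_val_two,
      Matrix.tail_cons, Matrix.head_cons]
    congr 1; ring

lemma expAux (a b : ℂ) (x : ℝ) :
    HasDerivAt (fun t : ℝ => Complex.exp (a * t + b)) (a * Complex.exp (a * x + b)) x := by
  have h : HasDerivAt (fun z : ℂ => Complex.exp (a * z + b))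
      (a * Complex.exp (a * (x : ℂ) + b)) (x : ℂ) := by
    simpa [mul_comm] using (((hasDerivAt_id (x : ℂ)).const_mul a).add_const b).cexp
  exact h.comp_ofReal

lemma conjZ : ∀ (j : Fin 3) (x y : ℝ), (starRingEnd ℂ) (Z j x y) = -Z j x y
  | 0, x, y => by
    simp only [Z, Ax, Ay, Matrix.cons_val_zero, map_add, map_mul, map_neg,
      Complex.conj_I, Complex.conj_ofReal, map_ofNat, map_zero]
    ring
  | 1, x, y => by
    simp only [Z, Ax, Ay, Matrix.cons_val_one, Matrix.head_cons, map_add, map_mul, map_neg,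
      Complex.conj_I, Complex.conj_ofReal, map_ofNat, map_zero, Matrix.cons_val_zero]
    ring
  | 2, x, y => by
    simp only [Z, Ax, Ay, Matrix.cons_val_two, Matrix.tail_cons, Matrix.head_cons, map_add,
      map_mul, map_neg, Complex.conj_I, Complex.conj_ofReal, map_ofNat, map_zero]
    ring

lemma conj_expZ (j : Fin 3) (x y : ℝ) :
    (starRingEnd ℂ) (Complex.exp (Z j x y)) = (Complex.exp (Z j x y))⁻¹ := by
  rw [← Complex.exp_conj, conjZ, Complex.exp_neg]

lemma s3inv : ((Real.sqrt 3 : ℝ) : ℂ)⁻¹ * ((Real.sqrt 3 : ℝ) : ℂ)⁻¹ = (3 : ℂ)⁻¹ := by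
  rw [← mul_inv, ← Complex.ofReal_mul, Real.mul_self_sqrt (by norm_num)]
  norm_num

/-- key algebraic identity for a single term of the Hermitian sums -/
lemma term (a b e : ℂ) (he : e ≠ 0) :
    (((Real.sqrt 3 : ℝ) : ℂ)⁻¹ * (a * e)) * (((Real.sqrt 3 : ℝ) : ℂ)⁻¹ * (b * e⁻¹))
      = (3 : ℂ)⁻¹ * (a * b) := by
  have : (((Real.sqrt 3 : ℝ) : ℂ)⁻¹ * (a * e)) * (((Real.sqrt 3 : ℝ) : ℂ)⁻¹ * (b * e⁻¹))
      = (((Real.sqrt 3 : ℝ) : ℂ)⁻¹ * ((Real.sqrt 3 : ℝ) : ℂ)⁻¹) * (a * b) * (e * e⁻¹) := by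
    ring
  rw [this, mul_inv_cancel₀ he, mul_one, s3inv]

lemma periodic_x (x y : ℝ) : cliff (x + 2 * Real.pi) y = cliff x y := by
  funext j
  rw [cliff_eq, cliff_eq]
  have hz : Z j (x + 2 * Real.pi) y = Z j x y + Ax j * ((2 * Real.pi : ℝ) : ℂ) := by
    simp only [Z]; push_cast; ring
  rw [hz, Complex.exp_add]
  have h1 : Complex.exp (Ax j * ((2 * Real.pi : ℝ) : ℂ)) = 1 := by
    fin_cases j <;> rw [Complex.exp_eq_one_iff]
    · exact ⟨2, by
        show 2 * Complex.I * ((2 * Real.pi : ℝ) : ℂ) = _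
        push_cast; ring⟩
    · exact ⟨-1, by
        show -Complex.I * ((2 * Real.pi : ℝ) : ℂ) = _
        push_cast; ring⟩
    · exact ⟨-1, by
        show -Complex.I * ((2 * Real.pi : ℝ) : ℂ) = _
        push_cast; ring⟩
  rw [h1, mul_one]

lemma periodic_y (x y : ℝ) : cliff x (y + 2 * Real.pi / Real.sqrt 3) = cliff x y := by
  funext j
  rw [cliff_eq, cliff_eq]
  have hz : Z j x (y + 2 * Real.pi / Real.sqrt 3)
      = Z j x y + Ay j * ((2 * Real.pi / Real.sqrt 3 : ℝ) : ℂ) := by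
    simp only [Z]; push_cast; ring
  rw [hz, Complex.exp_add]
  have hs : (Real.sqrt 3 : ℝ) ≠ 0 := by positivity
  have hsr : ((Real.sqrt 3 : ℝ) : ℂ) * ((2 * Real.pi / Real.sqrt 3 : ℝ) : ℂ)
      = ((2 * Real.pi : ℝ) : ℂ) := by
    rw [← Complex.ofReal_mul]
    congr 1
    field_simp
  have h1 : Complex.exp (Ay j * ((2 * Real.pi / Real.sqrt 3 : ℝ) : ℂ)) = 1 := by
    fin_cases j
    · show Complex.exp ((0 : ℂ) * _) = 1
      simp
    · rw [Complex.exp_eq_one_iff]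
      exact ⟨1, by
        show Complex.I * ((Real.sqrt 3 : ℝ) : ℂ) * ((2 * Real.pi / Real.sqrt 3 : ℝ) : ℂ) = _
        rw [mul_assoc, hsr]; push_cast; ring⟩
    · rw [Complex.exp_eq_one_iff]
      exact ⟨-1, by
        show -(Complex.I * ((Real.sqrt 3 : ℝ) : ℂ)) * ((2 * Real.pi / Real.sqrt 3 : ℝ) : ℂ) = _
        rw [neg_mul, mul_assoc, hsr]; push_cast; ring⟩
  rw [h1, mul_one]

theorem clifford_torus_lift
    (fx fy : ℝ → ℝ → Fin 3 → ℂ)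
    (hfx : ∀ (x y : ℝ) (j : Fin 3), HasDerivAt (fun t => cliff t y j) (fx x y j) x)
    (hfy : ∀ (x y : ℝ) (j : Fin 3), HasDerivAt (fun t => cliff x t j) (fy x y j) y) :
    -- (i) f maps into the unit sphere S⁵
    (∀ x y : ℝ, ∑ j, cliff x y j * (starRingEnd ℂ) (cliff x y j) = 1) ∧
    -- (ii) horizontality: ⟨∂f/∂x, f⟩ = 0 and ⟨∂f/∂y, f⟩ = 0
    (∀ x y : ℝ, ∑ j, fx x y j * (starRingEnd ℂ) (cliff x y j) = 0) ∧
    (∀ x y : ℝ, ∑ j, fy x y j * (starRingEnd ℂ) (cliff x y j) = 0) ∧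
    -- (iii) conformality: ⟨∂f/∂x, ∂f/∂y⟩ = 0 and ‖∂f/∂x‖² = ‖∂f/∂y‖² = 2
    (∀ x y : ℝ, ∑ j, fx x y j * (starRingEnd ℂ) (fy x y j) = 0) ∧
    (∀ x y : ℝ, ∑ j, fx x y j * (starRingEnd ℂ) (fx x y j) = 2) ∧
    (∀ x y : ℝ, ∑ j, fy x y j * (starRingEnd ℂ) (fy x y j) = 2) ∧
    -- (iv) double periodicity
    (∀ x y : ℝ, cliff (x + 2 * Real.pi) y = cliff x y) ∧
    (∀ x y : ℝ, cliff x (y + 2 * Real.pi / Real.sqrt 3) = cliff x y) := by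
  have hfx' : ∀ (x y : ℝ) (j : Fin 3),
      fx x y j = ((Real.sqrt 3 : ℂ))⁻¹ * (Ax j * Complex.exp (Z j x y)) := by
    intro x y j
    have he : (fun t : ℝ => cliff t y j)
        = fun t : ℝ => ((Real.sqrt 3 : ℂ))⁻¹ * Complex.exp (Ax j * t + Ay j * y) :=
      funext fun t => cliff_eq t y j
    have h1 := (expAux (Ax j) (Ay j * (y : ℂ)) x).const_mul ((Real.sqrt 3 : ℂ))⁻¹
    rw [← he] at h1
    exact (hfx x y j).unique h1
  have hfy' : ∀ (x y : ℝ) (j : Fin 3),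
      fy x y j = ((Real.sqrt 3 : ℂ))⁻¹ * (Ay j * Complex.exp (Z j x y)) := by
    intro x y j
    have he : (fun t : ℝ => cliff x t j)
        = fun t : ℝ => ((Real.sqrt 3 : ℂ))⁻¹ * Complex.exp (Ay j * t + Ax j * x) := by
      funext t; rw [cliff_eq]; congr 1; simp only [Z]; ring
    have h1 := (expAux (Ay j) (Ax j * (x : ℂ)) y).const_mul ((Real.sqrt 3 : ℂ))⁻¹
    rw [← he] at h1
    have h2 := (hfy x y j).unique h1
    rw [h2]; congr 2; simp only [Z]; ring
  have hone : ∀ (x y : ℝ) (j : Fin 3),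
      cliff x y j = ((Real.sqrt 3 : ℂ))⁻¹ * ((1 : ℂ) * Complex.exp (Z j x y)) := by
    intro x y j; rw [cliff_eq, one_mul]
  have hconj : ∀ (a : ℂ) (x y : ℝ) (j : Fin 3),
      (starRingEnd ℂ) (((Real.sqrt 3 : ℂ))⁻¹ * (a * Complex.exp (Z j x y)))
        = ((Real.sqrt 3 : ℂ))⁻¹ * ((starRingEnd ℂ) a * (Complex.exp (Z j x y))⁻¹) := by
    intro a x y j
    rw [map_mul, map_mul, map_inv₀, Complex.conj_ofReal, conj_expZ]
  have hterm : ∀ (a b : ℂ) (x y : ℝ) (j : Fin 3),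
      (((Real.sqrt 3 : ℂ))⁻¹ * (a * Complex.exp (Z j x y)))
        * (starRingEnd ℂ) (((Real.sqrt 3 : ℂ))⁻¹ * (b * Complex.exp (Z j x y)))
        = (3 : ℂ)⁻¹ * (a * (starRingEnd ℂ) b) := by
    intro a b x y j
    rw [hconj]
    exact term _ _ _ (Complex.exp_ne_zero _)
  refine ⟨?_, ?_, ?_, ?_, ?_, ?_, periodic_x, periodic_y⟩
  · intro x y
    simp only [Fin.sum_univ_three, hone x y, hterm]
    norm_num
  · intro x y
    simp only [Fin.sum_univ_three, hone x y, hfx', hterm]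
    simp only [Ax, Matrix.cons_val_zero, Matrix.cons_val_one, Matrix.head_cons,
      Matrix.cons_val_two, Matrix.tail_cons, map_one]
    ring
  · intro x y
    simp only [Fin.sum_univ_three, hone x y, hfy', hterm]
    simp only [Ay, Matrix.cons_val_zero, Matrix.cons_val_one, Matrix.head_cons,
      Matrix.cons_val_two, Matrix.tail_cons, map_one]
    ring
  · intro x y
    simp only [Fin.sum_univ_three, hfx', hfy', hterm]
    simp only [Ax, Ay, Matrix.cons_val_zero, Matrix.cons_val_one, Matrix.head_cons,
      Matrix.cons_val_two, Matrix.tail_cons, map_mul, map_neg, map_zero,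
      Complex.conj_I, Complex.conj_ofReal]
    ring
  · intro x y
    simp only [Fin.sum_univ_three, hfx', hterm]
    simp only [Ax, Matrix.cons_val_zero, Matrix.cons_val_one, Matrix.head_cons,
      Matrix.cons_val_two, Matrix.tail_cons, map_mul, map_neg, map_ofNat, Complex.conj_I]
    ring_nf
    rw [Complex.I_sq]
    ring
  · intro x y
    simp only [Fin.sum_univ_three, hfy', hterm]
    simp only [Ay, Matrix.cons_val_zero, Matrix.cons_val_one, Matrix.head_cons,
      Matrix.cons_val_two, Matrix.tail_cons, map_mul, map_neg, map_zero,
      Complex.conj_I, Complex.conj_ofReal]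
    have h3 : ((Real.sqrt 3 : ℝ) : ℂ) ^ 2 = 3 := by
      rw [sq, ← Complex.ofReal_mul, Real.mul_self_sqrt (by norm_num)]; norm_num
    ring_nf
    rw [Complex.I_sq, h3]
    ring
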